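/- arXiv:2401.09956 — 2 statements merged into one kernel-verified Lean document; each statement's English description precedes it below -/
import Mathlib

section
/- Let Fil: 0=L_0⊊L_1⊊⋯⊊L_m⊊L_m^⊥⊊⋯⊊L_1^⊥⊊L_0^⊥=V be a nontrivial quasi gr-semistable filtration of an orthogonal sheaf (V,⟨,⟩) of odd rank with orthogonal λ-connection ∇. Then deg(L_i)≥0 for all i, and deg(F)≤deg(L_1) holds for any subsheaf F⊂L_1. -/
/-!
Abstract framework for orthogonal/symplectic λ-connections, following
Sheng–Sun–Wang, "On the existence of gr-semistable filtrations of
orthogonal/symplectic λ-connections".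

`OSConn` models the following situation: `k` is an algebraically closed field,
`X` a smooth projective variety over `k` equipped with an ample line bundle `L`
and a reduced normal crossing divisor `D`; `(V, ⟨,⟩)` is an orthogonal or
symplectic sheaf on `X` (a torsion-free coherent sheaf with a symmetric, resp.
skew-symmetric, `O_X`-bilinear form, nondegenerate on an open subset of the
locally free locus whose complement has codimension `≥ 2`, and `det(V)² ≅ O_X`),
and `∇ : V → V ⊗ Ω_X(log D)` is an orthogonal/symplectic λ-connection.  The
structure records the lattice `Sub` of saturated subsheaves of `V`, together
with degree (w.r.t. `L`), rank, orthogonal complement, isotropy, and the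
relation `mapsTo F G` meaning `∇(F) ⊆ G ⊗ Ω_X(log D)`, as well as (as primitive
data) the semistability of the graded Higgs sheaf attached to a Hodge
filtration, maximal destabilizers of such graded Higgs sheaves, isomorphism of
subquotient sheaves, and morphisms between graded Higgs subsheaves.
-/

structure OSConn where
  /-- saturated subsheaves of `V`; `⊥ = 0` and `⊤ = V` -/
  Sub : Type
  [instLat : Lattice Sub]
  [instBO : BoundedOrder Sub]
  /-- degree with respect to the fixed ample line bundle `L` -/
  deg : Sub → ℤ
  /-- rank -/
  rk : Sub → ℕ
  /-- orthogonal complement `F^⊥ = ker (V → V^∨ → F^∨)` -/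
  perp : Sub → Sub
  /-- `F` is isotropic, i.e. `⟨,⟩|_{F ⊗ F} = 0` -/
  isotropic : Sub → Prop
  /-- `mapsTo F G` means `∇(F) ⊆ G ⊗ Ω_X(log D)` -/
  mapsTo : Sub → Sub → Prop
  /-- the bilinear form is symmetric (the orthogonal case; otherwise symplectic) -/
  orth : Prop
  /-- `subquotIso A B C D`: the subquotient sheaves `B/A` and `D/C` are isomorphic -/
  subquotIso : Sub → Sub → Sub → Sub → Prop
  /-- `grss t fil`: the graded orthogonal/symplectic Higgs sheaf associated to the
  Hodge filtration `0 = fil 0 ⊆ fil 1 ⊆ ⋯ ⊆ fil t = V` is slope-semistable -/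
  grss : ℕ → (ℕ → Sub) → Prop
  /-- `grMaxDestab t fil G`: the graded Higgs subsheaf `⊕_{i=1}^{t} (G i)/(fil (i-1))`
  is the maximal destabilizer of the graded Higgs sheaf of `(t, fil)` -/
  grMaxDestab : ℕ → (ℕ → Sub) → (ℕ → Sub) → Prop
  /-- morphisms of graded Higgs sheaves between graded Higgs subsheaves:
  `GrSubHom t₁ f₁ G₁ t₂ f₂ G₂` is the type of morphisms from the graded Higgs
  subsheaf determined by `G₁` of the graded Higgs sheaf of `(t₁, f₁)` to the one
  determined by `G₂` of the graded Higgs sheaf of `(t₂, f₂)` -/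
  GrSubHom : ℕ → (ℕ → Sub) → (ℕ → Sub) → ℕ → (ℕ → Sub) → (ℕ → Sub) → Type
  /-- such a morphism is injective -/
  grSubHomInjective : ∀ (t₁ : ℕ) (f₁ G₁ : ℕ → Sub) (t₂ : ℕ) (f₂ G₂ : ℕ → Sub),
    GrSubHom t₁ f₁ G₁ t₂ f₂ G₂ → Prop
  /-- such a morphism is an isomorphism on an open subset `U ⊆ X` with
  `codim(X ∖ U) ≥ 2` -/
  grSubHomCodim2Iso : ∀ (t₁ : ℕ) (f₁ G₁ : ℕ → Sub) (t₂ : ℕ) (f₂ G₂ : ℕ → Sub),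
    GrSubHom t₁ f₁ G₁ t₂ f₂ G₂ → Prop
  rk_bot : rk ⊥ = 0
  rk_strictMono : ∀ A B : Sub, A < B → rk A < rk B
  deg_bot : deg ⊥ = 0
  /-- `det(V)² ≅ O_X` forces `deg V = 0` -/
  deg_top : deg ⊤ = 0
  perp_bot : perp ⊥ = ⊤
  perp_perp : ∀ A, perp (perp A) = A
  perp_antitone : ∀ A B : Sub, A ≤ B → perp B ≤ perp A
  deg_perp : ∀ A, deg (perp A) = deg A
  rk_perp : ∀ A, rk (perp A) = rk (⊤ : Sub) - rk A
  isotropic_iff : ∀ A, isotropic A ↔ A ≤ perp A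
  mapsTo_mono : ∀ A A' B B' : Sub, A' ≤ A → B ≤ B' → mapsTo A B → mapsTo A' B'
  mapsTo_top : ∀ A, mapsTo A ⊤
  /-- compatibility of `∇` with the pairing: `∇(A) ⊆ B ⊗ Ω` implies
  `∇(B^⊥) ⊆ A^⊥ ⊗ Ω` -/
  mapsTo_perp : ∀ A B : Sub, mapsTo A B → mapsTo (perp B) (perp A)
  /-- in the orthogonal case, `∇(N) ⊆ N^⊥ ⊗ Ω_X(log D)` holds automatically for
  every rank-one isotropic saturated subsheaf `N` -/
  orth_rank_one : orth → ∀ N, isotropic N → rk N = 1 → mapsTo N (perp N)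

namespace OSConn

instance (S : OSConn) : Lattice S.Sub := S.instLat
instance (S : OSConn) : BoundedOrder S.Sub := S.instBO

variable (S : OSConn)

/-- slope `μ = deg / rk` (with respect to the ample line bundle `L`) -/
def mu (A : S.Sub) : ℚ := (S.deg A : ℚ) / (S.rk A : ℚ)

/-- slope of the quotient sheaf `B/A` -/
def muQuot (A B : S.Sub) : ℚ :=
  ((S.deg B - S.deg A : ℤ) : ℚ) / ((S.rk B : ℚ) - (S.rk A : ℚ))

/-- semistability of the triple `(V, ⟨,⟩, ∇)`: every nontrivial `∇`-invariant
isotropic subsheaf `W ⊆ V` has `μ(W) ≤ 0` -/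
def TripleSemistable : Prop :=
  ∀ W : S.Sub, W ≠ ⊥ → S.isotropic W → S.mapsTo W W → S.mu W ≤ 0

/-- semistability of the pair `(V, ∇)` (forgetting the bilinear form): every
nontrivial `∇`-invariant subsheaf `W ⊆ V` has `μ(W) ≤ μ(V)` -/
def ConnSemistable : Prop :=
  ∀ W : S.Sub, W ≠ ⊥ → S.mapsTo W W → S.mu W ≤ S.mu ⊤

/-- `M` is the maximal destabilizer (the first step of the Harder–Narasimhan
filtration) of the sheaf `V` -/
def IsMaxDestab (M : S.Sub) : Prop :=
  M ≠ ⊥ ∧ ∀ W : S.Sub, W ≠ ⊥ → S.mu W ≤ S.mu M ∧ (S.mu W = S.mu M → W ≤ M)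

/-- `M` is the maximal destabilizer of the pair `(V, ∇)` -/
def IsMaxDestabConn (M : S.Sub) : Prop :=
  M ≠ ⊥ ∧ S.mapsTo M M ∧
    ∀ W : S.Sub, W ≠ ⊥ → S.mapsTo W W → S.mu W ≤ S.mu M ∧ (S.mu W = S.mu M → W ≤ M)

/-- slope-stability of the subsheaf `M` (as a coherent sheaf) -/
def StableSub (M : S.Sub) : Prop :=
  ∀ W : S.Sub, W ≠ ⊥ → W < M → S.mu W < S.mu M

/-- slope-stability of the quotient sheaf `B/A` (as a coherent sheaf) -/
def StableQuot (A B : S.Sub) : Prop :=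
  ∀ W : S.Sub, A < W → W < B → S.muQuot A W < S.muQuot A B

/-- An orthogonal/symplectic Hodge filtration
`0 = fil 0 ⊆ fil 1 ⊆ ⋯ ⊆ fil t = V`: a filtration by saturated subsheaves which
is self-perpendicular (`fil (t - i) = (fil i)^⊥`, i.e. an orthogonal/symplectic
filtration) and Griffiths transverse (`∇(fil i) ⊆ fil (i+1) ⊗ Ω_X(log D)`). -/
structure HodgeFil where
  t : ℕ
  fil : ℕ → S.Sub
  mono : Monotone fil
  fil_bot : fil 0 = ⊥
  fil_top : ∀ i, t ≤ i → fil i = ⊤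
  selfperp : ∀ i ≤ t, fil (t - i) = S.perp (fil i)
  griffiths : ∀ i, S.mapsTo (fil i) (fil (i + 1))

/-- Condition (I) of quasi gr-semistability for a Hodge filtration with lower
half `0 = L 0 ⊆ L 1 ⊆ ⋯ ⊆ L m`: for every saturated Griffiths-transverse
filtration `0 = W 0 ⊆ W 1 ⊆ ⋯ ⊆ W m` with `L (i-1) ⊆ W i ⊆ L i` one has
`Σ_{0 ≤ i ≤ m} deg (W i) ≤ Σ_{0 ≤ i ≤ m} deg (L i)`. -/
def CondI (m : ℕ) (L : ℕ → S.Sub) : Prop :=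
  ∀ W : ℕ → S.Sub, W 0 = ⊥ →
    (∀ i, 1 ≤ i → i ≤ m → L (i - 1) ≤ W i ∧ W i ≤ L i) →
    (∀ i, i < m → S.mapsTo (W i) (W (i + 1))) →
    ∑ i ∈ Finset.range (m + 1), S.deg (W i) ≤ ∑ i ∈ Finset.range (m + 1), S.deg (L i)

/-- Condition (II) of quasi gr-semistability, odd type: for every saturated
Griffiths-transverse filtration
`0 ⊆ Sf 1 ⊆ ⋯ ⊆ Sf m ⊆ Sf (m+1) ⊆ (Tf m)^⊥ ⊆ ⋯ ⊆ (Tf 1)^⊥ ⊆ V` with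
`L (i-1) ⊆ Sf i ⊆ Tf i ⊆ L i`, `L m ⊆ Sf (m+1) ⊆ (L m)^⊥`, `Sf (m+1)` isotropic
and `deg (Sf (m+1)) > Σ (deg (L i) - deg (Sf i)) + Σ (deg (L i) - deg (Tf i))`,
one has `∇(Sf (m+1)) ⊆ (Sf (m+1))^⊥ ⊗ Ω_X(log D)`. -/
def CondIIOdd (m : ℕ) (L : ℕ → S.Sub) : Prop :=
  ∀ Sf Tf : ℕ → S.Sub, Sf 0 = ⊥ → Tf 0 = ⊥ →
    (∀ i, 1 ≤ i → i ≤ m → L (i - 1) ≤ Sf i ∧ Sf i ≤ Tf i ∧ Tf i ≤ L i) →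
    L m ≤ Sf (m + 1) → Sf (m + 1) ≤ S.perp (L m) → S.isotropic (Sf (m + 1)) →
    (∀ i, i ≤ m → S.mapsTo (Sf i) (Sf (i + 1))) →
    S.mapsTo (Sf (m + 1)) (S.perp (Tf m)) →
    (∀ i, 1 ≤ i → i < m → S.mapsTo (S.perp (Tf (i + 1))) (S.perp (Tf i))) →
    (∑ i ∈ Finset.range (m + 1), (S.deg (L i) - S.deg (Sf i))) +
        (∑ i ∈ Finset.range (m + 1), (S.deg (L i) - S.deg (Tf i))) <
      S.deg (Sf (m + 1)) →
    S.mapsTo (Sf (m + 1)) (S.perp (Sf (m + 1)))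

/-- Condition (II) of quasi gr-semistability, even type (`L m` Lagrangian): for
every saturated Griffiths-transverse filtration
`0 ⊆ Sf 1 ⊆ ⋯ ⊆ Sf m ⊆ (Tf m)^⊥ ⊆ ⋯ ⊆ (Tf 1)^⊥ ⊆ V` with
`L (i-1) ⊆ Sf i ⊆ Tf i ⊆ L i` and
`deg (Sf m) > Σ_{0≤i≤m-1} (deg (L i) - deg (Sf i)) + Σ_{0≤i≤m} (deg (L i) - deg (Tf i))`,
one has `∇(Sf m) ⊆ L m ⊗ Ω_X(log D)`. -/
def CondIIEven (m : ℕ) (L : ℕ → S.Sub) : Prop :=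
  ∀ Sf Tf : ℕ → S.Sub, Sf 0 = ⊥ → Tf 0 = ⊥ →
    (∀ i, 1 ≤ i → i ≤ m → L (i - 1) ≤ Sf i ∧ Sf i ≤ Tf i ∧ Tf i ≤ L i) →
    (∀ i, i < m → S.mapsTo (Sf i) (Sf (i + 1))) →
    S.mapsTo (Sf m) (S.perp (Tf m)) →
    (∀ i, 1 ≤ i → i < m → S.mapsTo (S.perp (Tf (i + 1))) (S.perp (Tf i))) →
    (∑ i ∈ Finset.range m, (S.deg (L i) - S.deg (Sf i))) +
        (∑ i ∈ Finset.range (m + 1), (S.deg (L i) - S.deg (Tf i))) <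
      S.deg (Sf m) →
    S.mapsTo (Sf m) (L m)

/-- Quasi gr-semistability of a Hodge filtration.  The filtration is of odd type
if its length `t` is odd (`t = 2m+1`, lower half `0 = fil 0 ⊆ ⋯ ⊆ fil m`, with
`fil m` not Lagrangian) and of even type if `t` is even (`t = 2m`, with `fil m`
Lagrangian); in both cases the lower half is `fil 0 ⊆ ⋯ ⊆ fil (t/2)`. -/
def HodgeFil.IsQuasiGrSS {S : OSConn} (F : S.HodgeFil) : Prop :=
  if F.t % 2 = 1 then S.CondI (F.t / 2) F.fil ∧ S.CondIIOdd (F.t / 2) F.fil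
  else S.CondI (F.t / 2) F.fil ∧ S.CondIIEven (F.t / 2) F.fil

/-- `(V, ⟨,⟩, ∇)` is gr-semistable: it admits a Hodge filtration whose
associated graded orthogonal/symplectic Higgs sheaf is semistable -/
def IsGrSS : Prop := ∃ F : S.HodgeFil, S.grss F.t F.fil

/-- `(V, ⟨,⟩, ∇)` is quasi gr-semistable: it admits a quasi gr-semistable Hodge
filtration -/
def IsQuasiGrSS : Prop := ∃ F : S.HodgeFil, F.IsQuasiGrSS

/-- degree of the graded Higgs subsheaf `⊕_{i=1}^{t} (G i)/(fil (i-1))` -/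
def grSubDeg (t : ℕ) (fil G : ℕ → S.Sub) : ℤ :=
  ∑ i ∈ Finset.range t, (S.deg (G (i + 1)) - S.deg (fil i))

/-- rank of the graded Higgs subsheaf `⊕_{i=1}^{t} (G i)/(fil (i-1))` -/
def grSubRk (t : ℕ) (fil G : ℕ → S.Sub) : ℤ :=
  ∑ i ∈ Finset.range t, ((S.rk (G (i + 1)) : ℤ) - (S.rk (fil i) : ℤ))

/-- slope of the graded Higgs subsheaf `⊕_{i=1}^{t} (G i)/(fil (i-1))` -/
def grSubMu (t : ℕ) (fil G : ℕ → S.Sub) : ℚ :=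
  (S.grSubDeg t fil G : ℚ) / (S.grSubRk t fil G : ℚ)

/-- The interleaved chain data of the graded Higgs subsheaf
`⊕_{i=1}^m (M i)/(L (i-1)) ⊕ (M (m+1))/(L m) ⊕ ⊕_{i=1}^m (N (m-i+1))^⊥/(L (m-i+1))^⊥`
of the graded Higgs sheaf of an odd-type Hodge filtration of length `2m+1`. -/
def destabData (m : ℕ) (M N : ℕ → S.Sub) : ℕ → S.Sub :=
  fun j => if j ≤ m + 1 then M j else S.perp (N (2 * m + 2 - j))

/-- The conclusion of [LSZ19, Lemma A.6]: the maximal destabilizer of the graded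
Higgs sheaf of the odd-type Hodge filtration `F` (with `F.t = 2m+1` and lower
half `L i = F.fil i`) is the isotropic saturated graded Higgs subsheaf
`⊕_{i=1}^m (M i)/(L (i-1)) ⊕ (M (m+1))/(L m) ⊕ ⊕_{i=1}^m (N (m-i+1))^⊥/(L (m-i+1))^⊥`
determined by data `M`, `N` with `L (i-1) ⊆ M i ⊆ N i ⊆ L i` and `M (m+1)`
isotropic. -/
def IsGrMaxDestabData (m : ℕ) (F : S.HodgeFil) (M N : ℕ → S.Sub) : Prop :=
  M 0 = ⊥ ∧
  (∀ i, 1 ≤ i → i ≤ m → F.fil (i - 1) ≤ M i ∧ M i ≤ N i ∧ N i ≤ F.fil i) ∧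
  F.fil m ≤ M (m + 1) ∧ M (m + 1) ≤ S.perp (F.fil m) ∧ S.isotropic (M (m + 1)) ∧
  S.grMaxDestab F.t F.fil (S.destabData m M N)

end OSConn

section Aux

lemma OSConn.mapsTo_bot' (S : OSConn) (B : S.Sub) : S.mapsTo ⊥ B := by
  have h := S.mapsTo_perp ⊤ ⊤ (S.mapsTo_top ⊤)
  have hb : S.perp ⊤ = (⊥ : S.Sub) := by
    have h2 := S.perp_perp (⊥ : S.Sub)
    rw [S.perp_bot] at h2
    exact h2
  rw [hb] at h
  exact S.mapsTo_mono _ _ _ _ le_rfl bot_le h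

lemma telescope_aux (d : ℕ → ℤ) (i : ℕ) :
    ∑ j ∈ Finset.range (i + 1), (d j - d (j - 1)) = d i - d 0 := by
  induction i with
  | zero => simp
  | succ n ih =>
      rw [Finset.sum_range_succ, ih]
      simp only [Nat.add_sub_cancel]
      ring

end Aux

/-- **Proposition 3.7.**  Let
`Fil : 0 = L 0 ⊊ L 1 ⊊ ⋯ ⊊ L m ⊊ (L m)^⊥ ⊊ ⋯ ⊊ (L 1)^⊥ ⊊ (L 0)^⊥ = V`
(so `F.t = 2m+1` and `L i = F.fil i`) be a nontrivial quasi gr-semistable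
filtration of an orthogonal sheaf `(V, ⟨,⟩)` of odd rank with orthogonal
λ-connection `∇`.  Then `deg (L i) ≥ 0` for all `i`, and `deg F' ≤ deg (L 1)`
holds for any subsheaf `F' ⊆ L 1`. -/
theorem deg_nonneg_of_quasi_grss_odd_rank (S : OSConn)
    (horth : S.orth) (hodd : Odd (S.rk (⊤ : S.Sub)))
    (F : S.HodgeFil) (hoddtype : Odd F.t)
    (hstrict : ∀ i, i < F.t → F.fil i < F.fil (i + 1))
    (hnontriv : 1 < F.t)
    (hq : F.IsQuasiGrSS) :
    (∀ i, i ≤ F.t / 2 → 0 ≤ S.deg (F.fil i)) ∧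
      ∀ F' : S.Sub, F' ≤ F.fil 1 → S.deg F' ≤ S.deg (F.fil 1) := by
  set m := F.t / 2 with hm
  have ht1 : F.t % 2 = 1 := Nat.odd_iff.mp hoddtype
  have hCondI : S.CondI m F.fil := by
    unfold OSConn.HodgeFil.IsQuasiGrSS at hq
    rw [if_pos ht1] at hq
    exact hq.1
  have hm1 : 1 ≤ m := by
    have : 3 ≤ F.t := by omega
    omega
  have hd0 : S.deg (F.fil 0) = 0 := by rw [F.fil_bot, S.deg_bot]
  constructor
  · intro i hi
    rcases Nat.eq_zero_or_pos i with h0 | h1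
    · subst h0; rw [hd0]
    · set W : ℕ → S.Sub := fun j => if j ≤ i then F.fil (j - 1) else F.fil j with hW
      have hW0 : W 0 = ⊥ := by
        simp only [hW]
        rw [if_pos (Nat.zero_le i)]
        simpa using F.fil_bot
      have hbetween : ∀ j, 1 ≤ j → j ≤ m → F.fil (j - 1) ≤ W j ∧ W j ≤ F.fil j := by
        intro j hj1 hjm
        simp only [hW]
        split_ifs with h
        · exact ⟨le_rfl, F.mono (Nat.sub_le j 1)⟩
        · exact ⟨F.mono (Nat.sub_le j 1), le_rfl⟩
      have hmap : ∀ j, j < m → S.mapsTo (W j) (W (j + 1)) := by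
        intro j hj
        simp only [hW]
        split_ifs with h h2
        · -- j ≤ i and j + 1 ≤ i
          rcases Nat.eq_zero_or_pos j with hj0 | hj1
          · subst hj0
            simp only [Nat.zero_sub]
            rw [F.fil_bot]
            exact S.mapsTo_bot' _
          · have : j - 1 + 1 = j := Nat.succ_pred_eq_of_pos hj1
            have hg := F.griffiths (j - 1)
            rw [this] at hg
            have : j + 1 - 1 = j := by omega
            rw [this]
            exact hg
        · -- j ≤ i, j + 1 > i, so j = i
          have hji : j = i := by omega
          subst hji
          rcases Nat.eq_zero_or_pos j with hj0 | hj1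
          · omega
          · have heq : j - 1 + 1 = j := Nat.succ_pred_eq_of_pos hj1
            have hg := F.griffiths (j - 1)
            rw [heq] at hg
            exact S.mapsTo_mono _ _ _ _ le_rfl (F.mono (Nat.le_succ j)) hg
        · omega
        · -- j > i
          exact F.griffiths j
      have key := hCondI W hW0 hbetween hmap
      have hsub : ∑ j ∈ Finset.range (i + 1), (S.deg (F.fil j) - S.deg (W j)) =
          ∑ j ∈ Finset.range (m + 1), (S.deg (F.fil j) - S.deg (W j)) := by
        apply Finset.sum_subset
        · exact Finset.range_subset_range.mpr (by omega)
        · intro x hx hx'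
          simp only [Finset.mem_range] at hx hx'
          have : ¬ x ≤ i := by omega
          simp only [hW, if_neg this, sub_self]
      have hsmall : ∑ j ∈ Finset.range (i + 1), (S.deg (F.fil j) - S.deg (W j)) =
          S.deg (F.fil i) - S.deg (F.fil 0) := by
        have : ∀ j ∈ Finset.range (i + 1),
            S.deg (F.fil j) - S.deg (W j)
              = S.deg (F.fil j) - S.deg (F.fil (j - 1)) := by
          intro j hj
          simp only [Finset.mem_range] at hj
          have : j ≤ i := by omega
          simp only [hW, if_pos this]
        rw [Finset.sum_congr rfl this]
        exact telescope_aux (fun j => S.deg (F.fil j)) i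
      have hdist : ∑ j ∈ Finset.range (m + 1), (S.deg (F.fil j) - S.deg (W j)) =
          (∑ j ∈ Finset.range (m + 1), S.deg (F.fil j))
            - ∑ j ∈ Finset.range (m + 1), S.deg (W j) := by
        rw [Finset.sum_sub_distrib]
      rw [hsub, hdist] at hsmall
      rw [hd0] at hsmall
      omega
  · intro F' hF'
    set W : ℕ → S.Sub := fun j => if j = 1 then F' else F.fil j with hW
    have hW0 : W 0 = ⊥ := by simp only [hW]; norm_num; exact F.fil_bot
    have hbetween : ∀ j, 1 ≤ j → j ≤ m → F.fil (j - 1) ≤ W j ∧ W j ≤ F.fil j := by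
      intro j hj1 hjm
      simp only [hW]
      split_ifs with h
      · subst h
        constructor
        · rw [F.fil_bot]; exact bot_le
        · exact hF'
      · exact ⟨F.mono (Nat.sub_le j 1), le_rfl⟩
    have hmap : ∀ j, j < m → S.mapsTo (W j) (W (j + 1)) := by
      intro j hj
      have hWj1 : W (j + 1) = F.fil (j + 1) ∨ (j = 0 ∧ W (j + 1) = F') := by
        simp only [hW]
        rcases Nat.eq_zero_or_pos j with h0 | h1
        · subst h0; right; simp
        · left; rw [if_neg (by omega)]
      rcases hWj1 with hw | ⟨h0, hw⟩
      · rw [hw]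
        rcases eq_or_ne j 1 with h1 | h1
        · subst h1
          simp only [hW, if_pos rfl]
          exact S.mapsTo_mono _ _ _ _ hF' le_rfl (F.griffiths 1)
        · simp only [hW, if_neg h1]
          exact F.griffiths j
      · subst h0
        rw [hw, hW0]
        exact S.mapsTo_bot' _
    have key := hCondI W hW0 hbetween hmap
    have hpt : ∀ j ∈ Finset.range (m + 1),
        S.deg (W j) - S.deg (F.fil j)
          = if j = 1 then S.deg F' - S.deg (F.fil 1) else 0 := by
      intro j hj
      simp only [hW]
      split_ifs with h
      · subst h; rfl
      · simp
    have hsum : ∑ j ∈ Finset.range (m + 1), (S.deg (W j) - S.deg (F.fil j)) =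
        S.deg F' - S.deg (F.fil 1) := by
      rw [Finset.sum_congr rfl hpt]
      rw [Finset.sum_ite_eq' (Finset.range (m + 1)) 1
        (fun _ => S.deg F' - S.deg (F.fil 1))]
      rw [if_pos (Finset.mem_range.mpr (by omega))]
    rw [Finset.sum_sub_distrib] at hsum
    omega
end

section
/- Let Fil: 0=L_0⊊L_1⊊⋯⊊L_t=V be a nontrivial quasi gr-semistable filtration (either of odd or even type) of an orthogonal/symplectic sheaf (V,⟨,⟩) of even rank with orthogonal/symplectic λ-connection ∇. Then deg(L_i)≥0 for all i, and deg(F)≤deg(L_1) holds for all subsheaves F⊂L_1. -/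
/-- telescoping sum -/
lemma tele_sum_aux (d : ℕ → ℤ) (h0 : d 0 = 0) (j : ℕ) :
    ∑ i ∈ Finset.range (j + 1), (d i - d (i - 1)) = d j := by
  induction j with
  | zero => simp [h0]
  | succ n ih =>
      rw [Finset.sum_range_succ, ih]
      simp

/-- **Proposition 4.6.**  Let `Fil : 0 = L 0 ⊊ L 1 ⊊ ⋯ ⊊ L t = V` (so
`L i = F.fil i`) be a nontrivial quasi gr-semistable filtration, either of odd
or of even type, of an orthogonal/symplectic sheaf `(V, ⟨,⟩)` of even rank with
orthogonal/symplectic λ-connection `∇`.  Then `deg (L i) ≥ 0` for all `i`, and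
`deg F' ≤ deg (L 1)` holds for all subsheaves `F' ⊆ L 1`. -/
theorem deg_nonneg_of_quasi_grss_even_rank (S : OSConn)
    (heven : Even (S.rk (⊤ : S.Sub)))
    (F : S.HodgeFil)
    (hstrict : ∀ i, i < F.t → F.fil i < F.fil (i + 1))
    (hnontriv : 1 < F.t)
    (hq : F.IsQuasiGrSS) :
    (∀ i, i ≤ F.t → 0 ≤ S.deg (F.fil i)) ∧
      ∀ F' : S.Sub, F' ≤ F.fil 1 → S.deg F' ≤ S.deg (F.fil 1) := by
  have hm : F.t / 2 = F.t / 2 := rfl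
  set m := F.t / 2 with hmdef
  have hI : S.CondI m F.fil := by
    unfold OSConn.HodgeFil.IsQuasiGrSS at hq
    split at hq <;> exact hq.1
  have hm1 : 1 ≤ m := by omega
  have hd0 : S.deg (F.fil 0) = 0 := by rw [F.fil_bot, S.deg_bot]
  -- Part 1 for indices in the lower half of the filtration
  have part1 : ∀ j, j ≤ m → 0 ≤ S.deg (F.fil j) := by
    intro j hj
    set W : ℕ → S.Sub := fun i => if i ≤ j then F.fil (i - 1) else F.fil i with hW
    have hW0 : W 0 = ⊥ := by simp [hW, F.fil_bot]
    have hbounds : ∀ i, 1 ≤ i → i ≤ m → F.fil (i - 1) ≤ W i ∧ W i ≤ F.fil i := by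
      intro i h1 h2
      by_cases hij : i ≤ j <;> simp only [hW, hij, if_true, if_false]
      · exact ⟨le_rfl, F.mono (by omega)⟩
      · exact ⟨F.mono (by omega), le_rfl⟩
    have hmaps : ∀ i, i < m → S.mapsTo (W i) (W (i + 1)) := by
      intro i hi
      rcases Nat.eq_zero_or_pos i with hi0 | hi1
      · subst hi0
        rw [hW0]
        exact S.mapsTo_bot' _
      · by_cases h1 : i + 1 ≤ j
        · have hij : i ≤ j := by omega
          simp only [hW, h1, hij, if_true]
          have := F.griffiths (i - 1)
          rwa [show i - 1 + 1 = i from by omega] at this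
        · by_cases h2 : i ≤ j
          · simp only [hW, h1, h2, if_true, if_false]
            have := F.griffiths (i - 1)
            rw [show i - 1 + 1 = i from by omega] at this
            exact S.mapsTo_mono _ _ _ _ le_rfl (F.mono (by omega)) this
          · have h3 : ¬ (i + 1 ≤ j) := by omega
            simp only [hW, h2, h3, if_false]
            exact F.griffiths i
    have h := hI W hW0 hbounds hmaps
    have key : ∑ i ∈ Finset.range (m + 1), (S.deg (F.fil i) - S.deg (W i))
        = S.deg (F.fil j) := by
      have hsub : ∑ i ∈ Finset.range (j + 1), (S.deg (F.fil i) - S.deg (W i))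
          = ∑ i ∈ Finset.range (m + 1), (S.deg (F.fil i) - S.deg (W i)) := by
        refine Finset.sum_subset (Finset.range_subset_range.2 (by omega)) ?_
        intro x _ hx'
        have hxj : ¬ x ≤ j := by
          simp only [Finset.mem_range] at hx'
          omega
        simp [hW, hxj]
      rw [← hsub]
      have := tele_sum_aux (fun i => S.deg (F.fil i)) hd0 j
      rw [← this]
      refine Finset.sum_congr rfl ?_
      intro x hx
      have hxj : x ≤ j := by
        simp only [Finset.mem_range] at hx
        omega
      simp [hW, hxj]
    rw [Finset.sum_sub_distrib] at key
    omega
  constructor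
  · intro i hi
    by_cases him : i ≤ m
    · exact part1 i him
    · have hsp := F.selfperp (F.t - i) (by omega)
      rw [show F.t - (F.t - i) = i from by omega] at hsp
      rw [hsp, S.deg_perp]
      exact part1 _ (by omega)
  · intro F' hF'
    set W : ℕ → S.Sub := fun i => if i = 1 then F' else F.fil i with hW
    have hW0 : W 0 = ⊥ := by simp [hW, F.fil_bot]
    have hbounds : ∀ i, 1 ≤ i → i ≤ m → F.fil (i - 1) ≤ W i ∧ W i ≤ F.fil i := by
      intro i h1 h2
      by_cases hi1 : i = 1 <;> simp only [hW, hi1, if_true, if_false]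
      · subst hi1
        exact ⟨by rw [F.fil_bot]; exact bot_le, hF'⟩
      · exact ⟨F.mono (by omega), le_rfl⟩
    have hmaps : ∀ i, i < m → S.mapsTo (W i) (W (i + 1)) := by
      intro i hi
      rcases Nat.eq_zero_or_pos i with hi0 | hi1
      · subst hi0
        rw [hW0]
        exact S.mapsTo_bot' _
      · by_cases h1 : i = 1
        · subst h1
          simp only [hW, if_true, show (1 + 1 : ℕ) ≠ 1 from by omega, if_false]
          exact S.mapsTo_mono _ _ _ _ hF' le_rfl (F.griffiths 1)
        · have h2 : i + 1 ≠ 1 := by omega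
          simp only [hW, h1, h2, if_false]
          exact F.griffiths i
    have h := hI W hW0 hbounds hmaps
    have key : ∑ i ∈ Finset.range (m + 1), (S.deg (F.fil i) - S.deg (W i))
        = S.deg (F.fil 1) - S.deg F' := by
      rw [Finset.sum_eq_single_of_mem 1 (Finset.mem_range.2 (by omega))]
      · simp [hW]
      · intro b _ hb
        simp [hW, hb]
    rw [Finset.sum_sub_distrib] at key
    omega
end
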